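/- arXiv:1103.6025 — 6 statements merged into one kernel-verified Lean document; each statement's English description precedes it below -/
import Mathlib

section
/- In every NM-chain, the monoid operation satisfies: x * y = 0 if x ≤ n(y), and x * y = min(x, y) otherwise, where n(x) = x ⇒ 0 is the residuated negation. -/
class NMChain (α : Type*) extends LinearOrder α, BoundedOrder α where
  mul : α → α → α
  imp : α → α → α
  mul_comm : ∀ x y : α, mul x y = mul y x
  mul_assoc : ∀ x y z : α, mul (mul x y) z = mul x (mul y z)
  mul_top : ∀ x : α, mul x ⊤ = x
  residuation : ∀ x y z : α, mul z x ≤ y ↔ z ≤ imp x y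
  involution : ∀ x : α, imp (imp x ⊥) ⊥ = x
  wnm : ∀ x y : α, max (imp (mul x y) ⊥) (imp (min x y) (mul x y)) = ⊤

def NMChain.neg {α : Type*} [NMChain α] (x : α) : α := NMChain.imp x ⊥

theorem nm_chain_mul_eq {α : Type*} [NMChain α] (x y : α) :
    NMChain.mul x y = if x ≤ NMChain.neg y then (⊥ : α) else min x y := by
  have htop : ∀ a : α, NMChain.mul ⊤ a = a := fun a => by
    rw [NMChain.mul_comm, NMChain.mul_top]
  have himp : ∀ a b : α, a ≤ b ↔ (⊤ : α) ≤ NMChain.imp a b := fun a b => by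
    rw [← NMChain.residuation, htop]
  have mono1 : ∀ a b c : α, a ≤ b → NMChain.mul a c ≤ NMChain.mul b c :=
    fun a b c hab => (NMChain.residuation c _ a).mpr
      (le_trans hab ((NMChain.residuation c _ b).mp le_rfl))
  split_ifs with h
  · exact le_antisymm ((NMChain.residuation y ⊥ x).mpr h) bot_le
  · have h1 : NMChain.mul x y ≤ x := by
      rw [NMChain.mul_comm]
      calc NMChain.mul y x ≤ NMChain.mul ⊤ x := mono1 y ⊤ x le_top
        _ = x := htop x
    have h2 : NMChain.mul x y ≤ y := by
      calc NMChain.mul x y ≤ NMChain.mul ⊤ y := mono1 x ⊤ y le_top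
        _ = y := htop y
    have hw := NMChain.wnm x y
    have := hw ▸ (le_refl (⊤ : α))
    rcases le_max_iff.mp (le_of_eq hw.symm) with hc | hc
    · exfalso
      have hbot : NMChain.mul x y ≤ ⊥ := by
        have := (himp (NMChain.mul x y) ⊥).mpr hc
        simpa using this
      exact h ((NMChain.residuation y ⊥ x).mp hbot)
    · exact le_antisymm (le_min h1 h2) ((himp (min x y) (NMChain.mul x y)).mpr hc)
end

section
/- In the NM-chain NM_∞ with universe {1/n : n ∈ ℕ⁺} ∪ {1 − 1/n : n ∈ ℕ⁺}, for every subset W and every element y, inf_{w∈W}(w * y) = (inf W) * y, where inf is taken in NM_∞ (which is a complete lattice). -/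
noncomputable def nmMul (x y : ℝ) : ℝ := if x ≤ 1 - y then 0 else min x y

noncomputable def nmImp (x y : ℝ) : ℝ := if x ≤ y then 1 else max (1 - x) y

def IsInfIn (A S : Set ℝ) (a : ℝ) : Prop :=
  a ∈ A ∧ (∀ s ∈ S, a ≤ s) ∧ ∀ b ∈ A, (∀ s ∈ S, b ≤ s) → b ≤ a

def IsSupIn (A S : Set ℝ) (a : ℝ) : Prop :=
  a ∈ A ∧ (∀ s ∈ S, s ≤ a) ∧ ∀ b ∈ A, (∀ s ∈ S, s ≤ b) → a ≤ b

def NMinfSet : Set ℝ := {x | ∃ n : ℕ, 0 < n ∧ (x = 1 / (n : ℝ) ∨ x = 1 - 1 / (n : ℝ))}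

def NMfin (n : ℕ) : Set ℝ := {x | ∃ k : ℕ, k ≤ n - 1 ∧ x = (k : ℝ) / ((n : ℝ) - 1)}

lemma NMinf_nonneg {x : ℝ} (hx : x ∈ NMinfSet) : 0 ≤ x := by
  obtain ⟨n, hn, h | h⟩ := hx <;> subst h
  · positivity
  · have hn' : (1:ℝ) ≤ n := by exact_mod_cast hn
    have : 1/(n:ℝ) ≤ 1 := by
      rw [div_le_one (by linarith)]; exact hn'
    linarith

lemma NMinf_le_one {x : ℝ} (hx : x ∈ NMinfSet) : x ≤ 1 := by
  obtain ⟨n, hn, h | h⟩ := hx <;> subst h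
  · have hn' : (1:ℝ) ≤ n := by exact_mod_cast hn
    rw [div_le_one (by linarith)]; exact hn'
  · have hn' : (0:ℝ) < n := by exact_mod_cast hn
    have : 0 < 1/(n:ℝ) := by positivity
    linarith

lemma zero_mem_NMinf : (0:ℝ) ∈ NMinfSet := ⟨1, by norm_num⟩

lemma nmMul_mem {x y : ℝ} (hx : x ∈ NMinfSet) (hy : y ∈ NMinfSet) :
    nmMul x y ∈ NMinfSet := by
  unfold nmMul
  split
  · exact zero_mem_NMinf
  · rcases min_choice x y with h | h <;> rw [h]
    · exact hx
    · exact hy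

lemma nmMul_nonneg {x y : ℝ} (hx : 0 ≤ x) (hy : 0 ≤ y) : 0 ≤ nmMul x y := by
  unfold nmMul; split
  · exact le_refl 0
  · exact le_min hx hy

lemma nmMul_mono_left {x x' y : ℝ} (hx' : 0 ≤ x') (hy : 0 ≤ y) (h : x ≤ x') :
    nmMul x y ≤ nmMul x' y := by
  unfold nmMul
  split_ifs with h1 h2
  · exact le_refl 0
  · exact le_min hx' hy
  · linarith
  · exact min_le_min h (le_refl y)

lemma nmMul_le_left {x y : ℝ} (hx : 0 ≤ x) : nmMul x y ≤ x := by
  unfold nmMul; split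
  · exact hx
  · exact min_le_left x y

open Classical in
/-- Any nonempty subset of NMinfSet with a positive lower bound has a minimum. -/
lemma NMinf_exists_min (S : Set ℝ) (hS : S ⊆ NMinfSet) (hne : S.Nonempty)
    (c : ℝ) (hc : 0 < c) (hlb : ∀ s ∈ S, c ≤ s) :
    ∃ m ∈ S, ∀ s ∈ S, m ≤ s := by
  by_cases hA : ∃ s ∈ S, s ≤ 1/2
  · -- Case A: some element ≤ 1/2; all such elements are of the form 1/k, k ≥ 2.
    have rep : ∀ s ∈ S, s ≤ 1/2 → ∃ k : ℕ, 2 ≤ k ∧ s = 1/(k:ℝ) := by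
      intro s hsS hs
      obtain ⟨m, hm, h | h⟩ := hS hsS
      · refine ⟨m, ?_, h⟩
        by_contra hlt
        interval_cases m
        rw [h] at hs; norm_num at hs
      · have hm' : (0:ℝ) < m := by exact_mod_cast hm
        have hcs := hlb s hsS
        have hm2 : (m:ℝ) ≤ 2 := by
          rw [h] at hs
          have : (1:ℝ)/2 ≤ 1/(m:ℝ) := by linarith
          rw [div_le_div_iff₀ (by norm_num) hm'] at this
          linarith
        have hm2' : m ≤ 2 := by exact_mod_cast hm2
        interval_cases m
        · rw [h] at hcs; norm_num at hcs; linarith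
        · exact ⟨2, le_refl 2, by rw [h]; norm_num⟩
    obtain ⟨s0, hs0S, hs0⟩ := hA
    obtain ⟨k0, hk02, hk0⟩ := rep s0 hs0S hs0
    set n : ℕ := ⌈1/c⌉₊ with hn
    set P : ℕ → Prop := fun k => 2 ≤ k ∧ (1/(k:ℝ)) ∈ S with hP
    have kbound : ∀ k : ℕ, P k → k ≤ n := by
      intro k ⟨hk2, hkS⟩
      have hk' : (0:ℝ) < k := by positivity
      have := hlb _ hkS
      have : (k:ℝ) ≤ 1/c := by
        rw [le_div_iff₀ hc]
        calc (k:ℝ) * c ≤ (k:ℝ) * (1/(k:ℝ)) := by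
              apply mul_le_mul_of_nonneg_left this (le_of_lt hk')
          _ = 1 := by field_simp
      calc k ≤ ⌈(k:ℝ)⌉₊ := by simp
        _ ≤ n := Nat.ceil_le_ceil this
    have hPk0 : P k0 := ⟨hk02, by rw [← hk0]; exact hs0S⟩
    set k := Nat.findGreatest P n with hk
    have hPk : P k := Nat.findGreatest_spec (kbound k0 hPk0) hPk0
    refine ⟨1/(k:ℝ), hPk.2, ?_⟩
    intro s hsS
    by_cases hs : s ≤ 1/2
    · obtain ⟨j, hj2, hj⟩ := rep s hsS hs
      have hjP : P j := ⟨hj2, by rw [← hj]; exact hsS⟩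
      have : j ≤ k := Nat.le_findGreatest (kbound j hjP) hjP
      rw [hj]
      apply one_div_le_one_div_of_le (by positivity)
      exact_mod_cast this
    · have hk2 : (2:ℝ) ≤ k := by exact_mod_cast hPk.1
      have : 1/(k:ℝ) ≤ 1/2 := one_div_le_one_div_of_le (by norm_num) hk2
      linarith
  · -- Case B: all elements > 1/2.
    push_neg at hA
    have rep : ∀ s ∈ S, s = 1 ∨ ∃ k : ℕ, 3 ≤ k ∧ s = 1 - 1/(k:ℝ) := by
      intro s hsS
      have hs2 := hA s hsS
      obtain ⟨m, hm, h | h⟩ := hS hsS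
      · left
        have hm' : (0:ℝ) < m := by exact_mod_cast hm
        have : (m:ℝ) < 2 := by
          rw [h] at hs2
          by_contra hge
          push_neg at hge
          have : (1:ℝ)/(m:ℝ) ≤ 1/2 := one_div_le_one_div_of_le (by norm_num) hge
          linarith
        have : m < 2 := by exact_mod_cast this
        interval_cases m
        · rw [h]; norm_num
      · right
        refine ⟨m, ?_, h⟩
        have hm' : (0:ℝ) < m := by exact_mod_cast hm
        by_contra hlt
        push_neg at hlt
        interval_cases m <;> rw [h] at hs2 <;> norm_num at hs2
    by_cases hQ : ∃ k : ℕ, 0 < k ∧ (1 - 1/(k:ℝ)) ∈ S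
    · set Q : ℕ → Prop := fun k => 0 < k ∧ (1 - 1/(k:ℝ)) ∈ S with hQdef
      have hQ' : ∃ k, Q k := hQ
      set j := Nat.find hQ' with hj
      have hQj : Q j := Nat.find_spec hQ'
      refine ⟨1 - 1/(j:ℝ), hQj.2, ?_⟩
      intro s hsS
      rcases rep s hsS with h | ⟨k, hk3, h⟩
      · have : (0:ℝ) < j := by exact_mod_cast hQj.1
        have : 0 < 1/(j:ℝ) := by positivity
        rw [h]; linarith
      · have hQk : Q k := ⟨by omega, by rw [← h]; exact hsS⟩
        have hjk : j ≤ k := Nat.find_min' hQ' hQk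
        have hj' : (0:ℝ) < j := by exact_mod_cast hQj.1
        have : 1/(k:ℝ) ≤ 1/(j:ℝ) := one_div_le_one_div_of_le hj' (by exact_mod_cast hjk)
        rw [h]; linarith
    · push_neg at hQ
      obtain ⟨s0, hs0⟩ := hne
      have hall : ∀ s ∈ S, s = 1 := by
        intro s hsS
        rcases rep s hsS with h | ⟨k, hk3, h⟩
        · exact h
        · exact absurd (by rw [← h]; exact hsS) (hQ k (by omega))
      refine ⟨s0, hs0, ?_⟩
      intro s hsS
      rw [hall s0 hs0, hall s hsS]

theorem nm_inf_mul_distrib_NMinf :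
    ∀ W ⊆ NMinfSet, W.Nonempty → ∀ y ∈ NMinfSet, ∀ a : ℝ,
      IsInfIn NMinfSet W a →
      IsInfIn NMinfSet ((fun w => nmMul w y) '' W) (nmMul a y) := by
  intro W hW hne y hy a ⟨haA, haLB, haGLB⟩
  have hy0 : 0 ≤ y := NMinf_nonneg hy
  have hy1 : y ≤ 1 := NMinf_le_one hy
  refine ⟨nmMul_mem haA hy, ?_, ?_⟩
  · rintro s ⟨w, hwW, rfl⟩
    exact nmMul_mono_left (NMinf_nonneg (hW hwW)) hy0 (haLB w hwW)
  · intro b hbA hblb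
    by_cases haW : a ∈ W
    · exact hblb _ ⟨a, haW, rfl⟩
    · -- a ∉ W; then a = 0
      have ha0 : a = 0 := by
        by_contra hne0
        have hapos : 0 < a := lt_of_le_of_ne (NMinf_nonneg haA) (Ne.symm hne0)
        obtain ⟨m, hmW, hmin⟩ := NMinf_exists_min W hW hne a hapos haLB
        have h1 : a ≤ m := haLB m hmW
        have h2 : m ≤ a := haGLB m (hW hmW) hmin
        exact haW (by rw [← le_antisymm h1 h2] at hmW; exact hmW)
      -- nmMul 0 y = 0
      have hmul0 : nmMul a y = 0 := by
        rw [ha0]; unfold nmMul; rw [if_pos (by linarith)]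
      rw [hmul0]
      -- b is a lower bound of W since nmMul w y ≤ w
      have : ∀ w ∈ W, b ≤ w := by
        intro w hwW
        exact le_trans (hblb _ ⟨w, hwW, rfl⟩) (nmMul_le_left (NMinf_nonneg (hW hwW)))
      have := haGLB b hbA this
      rw [ha0] at this
      exact this
end

section
/- In the NM-chain NM'_∞ with universe {1/2 − 1/(2n) : n ∈ ℕ⁺} ∪ {1/2 + 1/(2n) : n ∈ ℕ⁺} ∪ {1/2}, the distribution law inf_{w∈W}(w * y) = (inf W) * y fails: taking W = {1/2 + 1/(2n) : n ≥ 2} and y = 1/2, one has inf_{w∈W}(w * y) = 1/2 while (inf W) * y = 0. -/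
def NMpinfSet : Set ℝ :=
  {x | x = 1 / 2 ∨ ∃ n : ℕ, 0 < n ∧
    (x = 1 / 2 - 1 / (2 * (n : ℝ)) ∨ x = 1 / 2 + 1 / (2 * (n : ℝ)))}

theorem nm_inf_mul_distrib_fails_NMpinf :
    IsInfIn NMpinfSet {x : ℝ | ∃ n : ℕ, 2 ≤ n ∧ x = 1 / 2 + 1 / (2 * (n : ℝ))} (1 / 2) ∧
    IsInfIn NMpinfSet
      ((fun w => nmMul w (1 / 2)) ''
        {x : ℝ | ∃ n : ℕ, 2 ≤ n ∧ x = 1 / 2 + 1 / (2 * (n : ℝ))}) (1 / 2) ∧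
    nmMul ((1 : ℝ) / 2) (1 / 2) = 0 := by
  have hhalf : (1 / 2 : ℝ) ∈ NMpinfSet := Or.inl rfl
  refine ⟨⟨hhalf, ?_, ?_⟩, ⟨hhalf, ?_, ?_⟩, ?_⟩
  · rintro s ⟨n, hn, rfl⟩
    have : (0:ℝ) < 2 * n := by positivity
    nlinarith [one_div_pos.mpr this]
  · rintro b hb hle
    rcases hb with rfl | ⟨m, hm, hb | hb⟩
    · exact le_refl _
    · subst hb
      have : (0:ℝ) < 2 * m := by positivity
      nlinarith [one_div_pos.mpr this]
    · subst hb
      exfalso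
      have h1 := hle (1 / 2 + 1 / (2 * ((m+1 : ℕ) : ℝ))) ⟨m + 1, by omega, rfl⟩
      have hm' : (0:ℝ) < m := by exact_mod_cast hm
      push_cast at h1
      have h2 : 1 / (2 * ((m:ℝ) + 1)) < 1 / (2 * (m:ℝ)) := by
        apply one_div_lt_one_div_of_lt (by positivity); linarith
      linarith
  · rintro s ⟨w, ⟨n, hn, rfl⟩, rfl⟩
    have hn' : (2:ℝ) ≤ n := by exact_mod_cast hn
    have hpos : (0:ℝ) < 2 * n := by nlinarith
    have hgt : ¬ (1 / 2 + 1 / (2 * (n:ℝ)) ≤ 1 - 1 / 2) := by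
      have := one_div_pos.mpr hpos
      intro h; nlinarith
    simp only [nmMul, if_neg hgt]
    have : (1:ℝ)/2 ≤ 1 / 2 + 1 / (2 * (n:ℝ)) := by
      have := one_div_pos.mpr hpos; linarith
    rw [min_eq_right this]
  · rintro b hb hle
    have h2 := hle (nmMul (1 / 2 + 1 / (2 * ((2:ℕ) : ℝ))) (1/2))
      ⟨1 / 2 + 1 / (2 * ((2:ℕ) : ℝ)), ⟨2, le_refl _, rfl⟩, rfl⟩
    have : nmMul (1 / 2 + 1 / (2 * ((2:ℕ) : ℝ))) (1/2) = 1/2 := by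
      simp only [nmMul]
      norm_num
    linarith [h2, this ▸ h2]
  · simp [nmMul]; norm_num
end

section
/- Let ℬ be an NM-chain containing an element x ∈ B \ {0,1} with no predecessor in ℬ. Then with W = {w ∈ B : w < x}, one has sup_{w∈W}(x ⇒ w) = sup_{w∈W} max(n(x), w) < 1. -/
def HasPred {α : Type*} [LinearOrder α] (x : α) : Prop :=
  ∃ p, p < x ∧ ∀ c, ¬(p < c ∧ c < x)

def HasSucc {α : Type*} [LinearOrder α] (x : α) : Prop :=
  ∃ s, x < s ∧ ∀ c, ¬(x < c ∧ c < s)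

namespace NMChain

variable {α : Type*} [NMChain α]

lemma imp_eq_top_iff {a b : α} : imp a b = ⊤ ↔ a ≤ b := by
  constructor
  · intro h
    have := (residuation a b ⊤).mpr h.ge
    rwa [mul_comm, mul_top] at this
  · intro h
    refine le_antisymm le_top ?_
    rw [← residuation, mul_comm, mul_top]
    exact h

lemma mul_le_left (a b : α) : mul a b ≤ a := by
  rw [mul_comm, residuation, imp_eq_top_iff.mpr le_rfl]
  exact le_top

lemma mul_le_right (a b : α) : mul a b ≤ b := by
  rw [residuation, imp_eq_top_iff.mpr le_rfl]
  exact le_top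

lemma wnm' (a b : α) : mul a b = ⊥ ∨ mul a b = min a b := by
  have h := wnm a b
  rcases max_eq_iff.mp h with ⟨h1, _⟩ | ⟨h1, _⟩
  · left
    exact le_antisymm (by simpa [mul_comm, mul_top] using (residuation _ _ ⊤).mpr h1.ge) bot_le
  · right
    exact le_antisymm (le_min (mul_le_left a b) (mul_le_right a b))
      (by simpa [mul_comm, mul_top] using (residuation _ _ ⊤).mpr h1.ge)

lemma imp_lt_mono {a b c : α} (h : b ≤ c) : imp a b ≤ imp a c := by
  rw [← residuation]
  exact le_trans ((residuation a b _).mpr le_rfl) h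

lemma imp_eq_max {x w : α} (hw : w < x) : imp x w = max (neg x) w := by
  apply le_antisymm
  · set t := imp x w with ht
    have hmul : mul t x ≤ w := (residuation x w t).mpr le_rfl
    rcases wnm' t x with h | h
    · have : t ≤ imp x ⊥ := (residuation x ⊥ t).mp h.le
      exact le_trans this (le_max_left _ _)
    · rcases min_cases t x with ⟨he, _⟩ | ⟨he, hle⟩
      · exact le_trans (he ▸ h ▸ hmul) (le_max_right _ _)
      · have hxw : x ≤ w := by rw [← he, ← h]; exact hmul
        exact absurd (lt_of_le_of_lt hxw hw) (lt_irrefl x)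
  · apply max_le
    · exact imp_lt_mono bot_le
    · exact (residuation x w w).mp (mul_le_left w x)

end NMChain

theorem nm_chain_no_pred_sup_lt_top {α : Type*} [NMChain α] (x : α)
    (h0 : x ≠ ⊥) (h1 : x ≠ ⊤) (hnp : ¬ HasPred x) :
    (∀ w ∈ {w : α | w < x}, NMChain.imp x w = max (NMChain.neg x) w) ∧
    IsLUB ((fun w => NMChain.imp x w) '' {w : α | w < x}) (max (NMChain.neg x) x) ∧
    max (NMChain.neg x) x < ⊤ := by
  have hbot : (⊥ : α) < x := bot_le.lt_of_ne (Ne.symm h0)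
  have hform : ∀ w ∈ {w : α | w < x}, NMChain.imp x w = max (NMChain.neg x) w :=
    fun w hw => NMChain.imp_eq_max hw
  refine ⟨hform, ⟨?_, ?_⟩, ?_⟩
  · rintro y ⟨w, hw, rfl⟩
    show NMChain.imp x w ≤ _
    rw [NMChain.imp_eq_max hw]
    exact max_le_max le_rfl hw.le
  · intro u hu
    have hnegx : NMChain.neg x ≤ u := by
      have := hu ⟨⊥, hbot, rfl⟩
      change NMChain.imp x ⊥ ≤ u at this
      rw [NMChain.imp_eq_max hbot] at this
      exact le_trans (le_max_left _ _) this
    apply max_le hnegx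
    by_contra hxu
    push_neg at hxu
    -- u < x, no predecessor gives c with u < c < x
    have : ∃ c, u < c ∧ c < x := by
      by_contra hc
      push_neg at hc
      exact hnp ⟨u, hxu, fun c ⟨h1, h2⟩ => absurd h2 (not_lt.mpr (by
        by_contra h3; push_neg at h3; exact absurd h3 (not_lt.mpr (hc c h1))))⟩
    obtain ⟨c, huc, hcx⟩ := this
    have := hu ⟨c, hcx, rfl⟩
    change NMChain.imp x c ≤ u at this
    rw [NMChain.imp_eq_max hcx] at this
    exact absurd (le_trans (le_max_right (NMChain.neg x) c) this) (not_le.mpr huc)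
  · have hneg : NMChain.neg x < ⊤ := by
      rcases lt_or_eq_of_le (le_top : NMChain.neg x ≤ ⊤) with h | h
      · exact h
      · exact absurd (le_antisymm (NMChain.imp_eq_top_iff.mp h) bot_le) h0
    exact max_lt hneg (lt_top_iff_ne_top.mpr h1)
end

section
/- For integers 1 < m < n with m and n of the same parity, the finite NM-chain NM_m embeds into NM_n via a map preserving 0, 1, the negation, and the order (hence all operations, infima and suprema). -/
noncomputable def nmPhi (r x : ℝ) : ℝ :=
  if x < 1/2 then x * r else if x = 1/2 then 1/2 else 1 - (1 - x) * r

lemma nmPhi_neg (r x : ℝ) : nmPhi r (1 - x) = 1 - nmPhi r x := by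
  unfold nmPhi
  split_ifs <;>
    first
    | ring1
    | linarith
    | exact absurd (by linarith : x = 1/2) (by assumption)
    | exact absurd (by linarith : 1 - x = 1/2) (by assumption)

lemma nmPhi_mono {r : ℝ} (hr0 : 0 < r) (hr1 : r < 1) : StrictMono (nmPhi r) := by
  intro x y hxy
  unfold nmPhi
  have h2 : (1/2 : ℝ) * r < 1/2 := by linarith
  split_ifs
  all_goals first
    | linarith
    | linarith [mul_lt_mul_of_pos_right hxy hr0]
    | linarith [mul_lt_mul_of_pos_right (show x < 1/2 by linarith) hr0]
    | linarith [mul_lt_mul_of_pos_right (show x < 1/2 by linarith) hr0,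
        mul_lt_mul_of_pos_right (show (1:ℝ) - y < 1/2 by linarith) hr0]
    | linarith [mul_lt_mul_of_pos_right (show (1:ℝ) - y < 1/2 by linarith) hr0]
    | linarith [mul_lt_mul_of_pos_right (show (1:ℝ) - y < 1 - x by linarith) hr0]

lemma nmfin_finite (m : ℕ) : (NMfin m).Finite := by
  have h : NMfin m ⊆ (fun k : ℕ => (k : ℝ) / ((m : ℝ) - 1)) '' (Set.Iic (m - 1)) := by
    rintro x ⟨k, hk, rfl⟩; exact ⟨k, hk, rfl⟩
  exact ((Set.finite_Iic _).image _).subset h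

lemma nmfin_bounds {m : ℕ} (hm : 1 < m) {x : ℝ} (hx : x ∈ NMfin m) : 0 ≤ x ∧ x ≤ 1 := by
  obtain ⟨k, hk, rfl⟩ := hx
  have hm0 : (0:ℝ) < (m:ℝ) - 1 := by
    have : (1:ℝ) < m := by exact_mod_cast hm
    linarith
  have hkr : (k:ℝ) ≤ (m:ℝ) - 1 := by
    have : (k:ℝ) ≤ ((m - 1 : ℕ) : ℝ) := by exact_mod_cast hk
    rwa [Nat.cast_sub hm.le, Nat.cast_one] at this
  constructor
  · positivity
  · rw [div_le_one hm0]; exact hkr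

lemma nmfin_one_mem {m : ℕ} (hm : 1 < m) : (1:ℝ) ∈ NMfin m := by
  have hm0 : ((m:ℝ) - 1) ≠ 0 := by
    have : (1:ℝ) < m := by exact_mod_cast hm
    linarith
  exact ⟨m - 1, le_refl _, by rw [Nat.cast_sub hm.le, Nat.cast_one, div_self hm0]⟩

lemma nmfin_zero_mem {m : ℕ} (hm : 1 < m) : (0:ℝ) ∈ NMfin m :=
  ⟨0, Nat.zero_le _, by simp⟩

lemma nmfin_neg_mem {m : ℕ} (hm : 1 < m) {x : ℝ} (hx : x ∈ NMfin m) :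
    (1 - x) ∈ NMfin m := by
  obtain ⟨k, hk, rfl⟩ := hx
  have hm0 : ((m:ℝ) - 1) ≠ 0 := by
    have : (1:ℝ) < m := by exact_mod_cast hm
    linarith
  refine ⟨m - 1 - k, by omega, ?_⟩
  have hc : ((m - 1 - k : ℕ) : ℝ) = (m:ℝ) - 1 - k := by
    have h1 : k ≤ m - 1 := hk
    push_cast [Nat.cast_sub hk, Nat.cast_sub hm.le]
    ring
  rw [hc]
  field_simp

lemma nmPhi_mapsTo {m n : ℕ} (hm : 1 < m) (hmn : m < n) (hpar : m % 2 = n % 2) :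
    Set.MapsTo (nmPhi (((m:ℝ) - 1) / ((n:ℝ) - 1))) (NMfin m) (NMfin n) := by
  have hmR : (1:ℝ) < m := by exact_mod_cast hm
  have hnR : (m:ℝ) < n := by exact_mod_cast hmn
  have hm0 : (0:ℝ) < (m:ℝ) - 1 := by linarith
  have hn0 : (0:ℝ) < (n:ℝ) - 1 := by linarith
  rintro x ⟨k, hk, rfl⟩
  have hkr : (k:ℝ) ≤ (m:ℝ) - 1 := by
    have : (k:ℝ) ≤ ((m - 1 : ℕ) : ℝ) := by exact_mod_cast hk
    rwa [Nat.cast_sub hm.le, Nat.cast_one] at this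
  rcases lt_trichotomy (2 * k) (m - 1) with h | h | h
  · -- lower half
    have h2 : (2 * k : ℝ) < (m:ℝ) - 1 := by
      have : ((2 * k : ℕ) : ℝ) < ((m - 1 : ℕ) : ℝ) := by exact_mod_cast h
      rwa [Nat.cast_mul, Nat.cast_ofNat, Nat.cast_sub hm.le, Nat.cast_one] at this
    have hx : (k:ℝ) / ((m:ℝ) - 1) < 1/2 := by
      rw [div_lt_iff₀ hm0]; linarith
    refine ⟨k, by omega, ?_⟩
    rw [nmPhi, if_pos hx]
    field_simp
  · -- middle point
    have h2 : (2 * k : ℝ) = (m:ℝ) - 1 := by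
      have : ((2 * k : ℕ) : ℝ) = ((m - 1 : ℕ) : ℝ) := by exact_mod_cast h
      rwa [Nat.cast_mul, Nat.cast_ofNat, Nat.cast_sub hm.le, Nat.cast_one] at this
    have hx : (k:ℝ) / ((m:ℝ) - 1) = 1/2 := by
      rw [div_eq_iff hm0.ne']; linarith
    have hnodd : n % 2 = 1 := by omega
    refine ⟨(n - 1) / 2, by omega, ?_⟩
    have h3 : (2 * ((n - 1) / 2) : ℕ) = n - 1 := by omega
    have h4 : (2 * (((n - 1) / 2 : ℕ) : ℝ)) = (n:ℝ) - 1 := by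
      have : ((2 * ((n - 1) / 2) : ℕ) : ℝ) = ((n - 1 : ℕ) : ℝ) := by exact_mod_cast h3
      rwa [Nat.cast_mul, Nat.cast_ofNat, Nat.cast_sub (by omega : 1 ≤ n), Nat.cast_one] at this
    rw [nmPhi, hx, if_neg (lt_irrefl _), if_pos rfl]
    rw [eq_div_iff hn0.ne']; linarith
  · -- upper half
    have h2 : (m:ℝ) - 1 < 2 * k := by
      have : ((m - 1 : ℕ) : ℝ) < ((2 * k : ℕ) : ℝ) := by exact_mod_cast h
      rwa [Nat.cast_mul, Nat.cast_ofNat, Nat.cast_sub hm.le, Nat.cast_one] at this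
    have hx : 1/2 < (k:ℝ) / ((m:ℝ) - 1) := by
      rw [lt_div_iff₀ hm0]; linarith
    refine ⟨n - m + k, by omega, ?_⟩
    have hc : ((n - m + k : ℕ) : ℝ) = (n:ℝ) - m + k := by
      push_cast [Nat.cast_sub hmn.le]; ring
    rw [nmPhi, if_neg (by linarith), if_neg hx.ne', hc]
    field_simp
    ring

theorem nmfin_embeds_nmfin (m n : ℕ) (hm : 1 < m) (hmn : m < n)
    (hpar : m % 2 = n % 2) :
    ∃ φ : ℝ → ℝ,
      Set.MapsTo φ (NMfin m) (NMfin n) ∧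
      StrictMonoOn φ (NMfin m) ∧
      φ 0 = 0 ∧ φ 1 = 1 ∧
      (∀ x ∈ NMfin m, φ (1 - x) = 1 - φ x) ∧
      (∀ x ∈ NMfin m, ∀ y ∈ NMfin m, φ (nmMul x y) = nmMul (φ x) (φ y)) ∧
      (∀ x ∈ NMfin m, ∀ y ∈ NMfin m, φ (nmImp x y) = nmImp (φ x) (φ y)) ∧
      (∀ T ⊆ NMfin m, ∀ a : ℝ, IsInfIn (NMfin m) T a → IsInfIn (NMfin n) (φ '' T) (φ a)) ∧
      (∀ T ⊆ NMfin m, ∀ a : ℝ, IsSupIn (NMfin m) T a → IsSupIn (NMfin n) (φ '' T) (φ a)) := by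
  have hmR : (1:ℝ) < m := by exact_mod_cast hm
  have hnR : (m:ℝ) < n := by exact_mod_cast hmn
  have hm0 : (0:ℝ) < (m:ℝ) - 1 := by linarith
  have hn0 : (0:ℝ) < (n:ℝ) - 1 := by linarith
  set r : ℝ := ((m:ℝ) - 1) / ((n:ℝ) - 1) with hrdef
  have hr0 : 0 < r := div_pos hm0 hn0
  have hr1 : r < 1 := (div_lt_one hn0).mpr (by linarith)
  have hmono := nmPhi_mono hr0 hr1
  have hmaps : Set.MapsTo (nmPhi r) (NMfin m) (NMfin n) := nmPhi_mapsTo hm hmn hpar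
  have h0 : nmPhi r 0 = 0 := by norm_num [nmPhi]
  have h1 : nmPhi r 1 = 1 := by norm_num [nmPhi]
  have hneg := nmPhi_neg r
  refine ⟨nmPhi r, hmaps, hmono.strictMonoOn _, h0, h1, fun x _ => hneg x, ?_, ?_, ?_, ?_⟩
  · intro x _ y _
    unfold nmMul
    have hle : x ≤ 1 - y ↔ nmPhi r x ≤ 1 - nmPhi r y := by
      rw [← hneg y]; exact (hmono.le_iff_le).symm
    split_ifs with h h' h'
    · exact h0
    · exact absurd (hle.mp h) h'
    · exact absurd (hle.mpr h') h
    · exact hmono.monotone.map_min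
  · intro x _ y _
    unfold nmImp
    split_ifs with h h' h'
    · exact h1
    · exact absurd (hmono.le_iff_le.mpr h) h'
    · exact absurd (hmono.le_iff_le.mp h') h
    · rw [hmono.monotone.map_max, hneg x]
  · rintro T hT a ⟨haA, halb, hagr⟩
    refine ⟨hmaps haA, ?_, ?_⟩
    · rintro s ⟨t, htT, rfl⟩; exact hmono.monotone (halb t htT)
    · intro b hbA hblb
      rcases T.eq_empty_or_nonempty with rfl | hne
      · have ha1 : a = 1 := le_antisymm (nmfin_bounds hm haA).2
          (hagr 1 (nmfin_one_mem hm) (by simp))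
        rw [ha1, h1]
        exact (nmfin_bounds (hm.trans hmn) hbA).2
      · obtain ⟨t0, ht0T, ht0min⟩ :=
          Set.exists_min_image T id ((nmfin_finite m).subset hT) hne
        have ha : a = t0 := le_antisymm (halb t0 ht0T) (hagr t0 (hT ht0T) ht0min)
        rw [ha]
        exact hblb _ ⟨t0, ht0T, rfl⟩
  · rintro T hT a ⟨haA, haub, halr⟩
    refine ⟨hmaps haA, ?_, ?_⟩
    · rintro s ⟨t, htT, rfl⟩; exact hmono.monotone (haub t htT)
    · intro b hbA hbub
      rcases T.eq_empty_or_nonempty with rfl | hne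
      · have ha0 : a = 0 := le_antisymm (halr 0 (nmfin_zero_mem hm) (by simp))
          (nmfin_bounds hm haA).1
        rw [ha0, h0]
        exact (nmfin_bounds (hm.trans hmn) hbA).1
      · obtain ⟨t0, ht0T, ht0max⟩ :=
          Set.exists_max_image T id ((nmfin_finite m).subset hT) hne
        have ha : a = t0 := le_antisymm (halr t0 (hT ht0T) ht0max) (haub t0 ht0T)
        rw [ha]
        exact hbub _ ⟨t0, ht0T, rfl⟩
end

section
/- The finite NM-chain NM_n satisfies the identity (a sentence of the algebraic language) ⋀_{i<k}((x_i ⇒ x_{i+1}) ⇒ x_{i+1}) ≤ ⋁_{i<k+1} x_i for all assignments if and only if n < 2k + 2. -/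
/-!
Write `t(u, v) = (u ⇒ v) ⇒ v`. On `[0, 1]`, `t(u, v)` is `v` if `u ≤ v`, `u` if `v < u` and
`u + v < 1`, and `1` if `v < u` and `u + v ≥ 1`. Hence an assignment violates `S_k` exactly when
`x₀ > x₁ > ⋯ > x_k`, `x₀ < 1` and `x_{k-1} + x_k ≥ 1`. On the grid of multiples of `1/(n - 1)` such
a chain drops by at least one step per link, so `x_{k-1} + x_k ≤ 2 - (2k + 1)/(n - 1)`, which forces
`2k + 2 ≤ n`; conversely, when `2k + 2 ≤ n`, `xᵢ = (n - 2 - i)/(n - 1)` is such a chain.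
-/

section NMImp

variable {u v : ℝ}

lemma nmImp_le_one (hu : 0 ≤ u) (hv : v ≤ 1) : nmImp u v ≤ 1 := by
  unfold nmImp
  split_ifs
  · exact le_rfl
  · exact max_le (by linarith) hv

lemma nmImp_nonneg (hu : u ≤ 1) : 0 ≤ nmImp u v := by
  unfold nmImp
  split_ifs
  · exact zero_le_one
  · exact le_max_of_le_left (by linarith)

lemma nmImp_nmImp_le_one (hu : u ≤ 1) (hv : v ≤ 1) : nmImp (nmImp u v) v ≤ 1 :=
  nmImp_le_one (nmImp_nonneg hu) hv

lemma nmImp_nmImp_of_le (h : u ≤ v) (hv₀ : 0 ≤ v) (hv₁ : v ≤ 1) :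
    nmImp (nmImp u v) v = v := by
  simp only [nmImp, if_pos h, sub_self]
  split_ifs
  · linarith
  · exact max_eq_right hv₀

lemma nmImp_nmImp_of_add_lt_one (hvu : v < u) (h : u + v < 1) :
    nmImp (nmImp u v) v = u := by
  have hinner : nmImp u v = 1 - u := by
    rw [nmImp, if_neg hvu.not_ge, max_eq_left (by linarith)]
  rw [hinner, nmImp, if_neg (by linarith), sub_sub_cancel, max_eq_left hvu.le]

lemma nmImp_nmImp_eq_one (hvu : v < u) (h : 1 ≤ u + v) : nmImp (nmImp u v) v = 1 := by
  have hinner : nmImp u v = v := by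
    rw [nmImp, if_neg hvu.not_ge, max_eq_right (by linarith)]
  rw [hinner, nmImp, if_pos le_rfl]

lemma lt_and_one_le_add_of_max_lt_nmImp_nmImp (hv₀ : 0 ≤ v) (hv₁ : v ≤ 1)
    (h : max u v < nmImp (nmImp u v) v) : v < u ∧ 1 ≤ u + v := by
  obtain ⟨hu, hv⟩ := max_lt_iff.mp h
  have hvu : v < u := by
    by_contra! huv
    exact hv.ne (nmImp_nmImp_of_le huv hv₀ hv₁).symm
  refine ⟨hvu, ?_⟩
  by_contra! hlt
  exact hu.ne (nmImp_nmImp_of_add_lt_one hvu hlt).symm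

end NMImp

section Grid

variable {n k : ℕ}

lemma mem_Icc_of_mem_NMfin (hn : 1 ≤ n) {x : ℝ} (hx : x ∈ NMfin n) : x ∈ Set.Icc (0 : ℝ) 1 := by
  obtain ⟨a, ha, rfl⟩ := hx
  rw [← Nat.cast_pred hn]
  exact ⟨by positivity, div_le_one_of_le₀ (by exact_mod_cast ha) (Nat.cast_nonneg _)⟩

lemma apply_add_le_apply_zero_of_succ_lt {a : ℕ → ℕ} (h : ∀ i < k, a (i + 1) < a i) :
    ∀ i ≤ k, a i + i ≤ a 0
  | 0, _ => le_rfl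
  | i + 1, hi => by
    have := apply_add_le_apply_zero_of_succ_lt h i (by omega)
    have := h i (by omega)
    omega

lemma two_mul_add_two_le_of_strictAnti_NMfin (hn : 2 ≤ n) {x : ℕ → ℝ} (hx : ∀ i, x i ∈ NMfin n)
    (h₀ : x 0 < 1) (hdec : ∀ i < k, x (i + 1) < x i) (hsum : 1 ≤ x (k - 1) + x k) :
    2 * k + 2 ≤ n := by
  choose a ha hxa using hx
  have hN : (0 : ℝ) < ((n - 1 : ℕ) : ℝ) := by exact_mod_cast (by omega : 0 < n - 1)
  simp only [hxa, ← Nat.cast_pred (by omega : 0 < n)] at h₀ hdec hsum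
  rw [div_lt_one hN, Nat.cast_lt] at h₀
  simp only [div_lt_div_iff_of_pos_right hN, Nat.cast_lt] at hdec
  rw [← add_div, one_le_div hN] at hsum
  norm_cast at hsum
  have h₁ := apply_add_le_apply_zero_of_succ_lt hdec (k - 1) (by omega)
  have h₂ := apply_add_le_apply_zero_of_succ_lt hdec k le_rfl
  omega

end Grid

section Sk

open Finset

variable {n k : ℕ}

lemma chain_of_sup'_lt_inf' {x : ℕ → ℝ} (hx : ∀ i, x i ∈ Set.Icc (0 : ℝ) 1)
    (hk : (range k).Nonempty) (hk' : (range (k + 1)).Nonempty)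
    (h : (range (k + 1)).sup' hk' x <
      (range k).inf' hk (fun i => nmImp (nmImp (x i) (x (i + 1))) (x (i + 1)))) :
    x 0 < 1 ∧ ∀ i < k, x (i + 1) < x i ∧ 1 ≤ x i + x (i + 1) := by
  have hlt : ∀ j ≤ k, ∀ i < k, x j < nmImp (nmImp (x i) (x (i + 1))) (x (i + 1)) :=
    fun j hj i hi => (lt_inf'_iff _).mp ((sup'_lt_iff _).mp h j (mem_range.mpr (by omega))) i
      (mem_range.mpr hi)
  have hk₀ : 0 < k := Nat.pos_of_ne_zero (by simpa using hk)
  refine ⟨(hlt 0 hk₀.le 0 hk₀).trans_le (nmImp_nmImp_le_one (hx 0).2 (hx 1).2), fun i hi => ?_⟩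
  exact lt_and_one_le_add_of_max_lt_nmImp_nmImp (hx (i + 1)).1 (hx (i + 1)).2
    (max_lt (hlt i (by omega) i hi) (hlt (i + 1) hi i hi))

noncomputable def nmStaircase (n i : ℕ) : ℝ := ((n - 2 - i : ℕ) : ℝ) / ((n : ℝ) - 1)

lemma nmStaircase_mem_NMfin (i : ℕ) : nmStaircase n i ∈ NMfin n := ⟨n - 2 - i, by omega, rfl⟩

lemma sup'_nmStaircase_lt_inf' (hn : 2 * k + 2 ≤ n) (hk : (range k).Nonempty)
    (hk' : (range (k + 1)).Nonempty) :
    (range (k + 1)).sup' hk' (nmStaircase n) <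
      (range k).inf' hk fun i =>
        nmImp (nmImp (nmStaircase n i) (nmStaircase n (i + 1))) (nmStaircase n (i + 1)) := by
  have hN : (0 : ℝ) < ((n - 1 : ℕ) : ℝ) := by exact_mod_cast (by omega : 0 < n - 1)
  have hs (i : ℕ) : nmStaircase n i = ((n - 2 - i : ℕ) : ℝ) / ((n - 1 : ℕ) : ℝ) := by
    rw [nmStaircase, Nat.cast_pred (by omega)]
  calc _ < (1 : ℝ) := (sup'_lt_iff _).mpr fun i _ => by
        rw [hs, div_lt_one hN, Nat.cast_lt]
        omega
    _ ≤ _ := le_inf' _ _ fun i hi => by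
        have hi := mem_range.mp hi
        refine (nmImp_nmImp_eq_one ?_ ?_).ge
        · rw [hs, hs, div_lt_div_iff_of_pos_right hN, Nat.cast_lt]
          omega
        · rw [hs, hs, ← add_div, one_le_div hN]
          norm_cast
          omega

end Sk

theorem nmfin_satisfies_Sk_iff (n k : ℕ) (hn : 2 ≤ n) (hk : 1 ≤ k) :
    (∀ x : ℕ → ℝ, (∀ i, x i ∈ NMfin n) →
      (Finset.range k).inf' (Finset.nonempty_range_iff.mpr (by omega))
        (fun i => nmImp (nmImp (x i) (x (i + 1))) (x (i + 1)))
      ≤ (Finset.range (k + 1)).sup' (Finset.nonempty_range_iff.mpr (by omega)) x)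
    ↔ n < 2 * k + 2 := by
  constructor
  · intro H
    by_contra! hle
    exact (H _ nmStaircase_mem_NMfin).not_gt (sup'_nmStaircase_lt_inf' hle _ _)
  · intro hlt x hx
    by_contra! hgt
    obtain ⟨h₀, hchain⟩ :=
      chain_of_sup'_lt_inf' (fun i => mem_Icc_of_mem_NMfin (by omega) (hx i)) _ _ hgt
    have hlast := (hchain (k - 1) (by omega)).2
    rw [Nat.sub_add_cancel hk] at hlast
    have := two_mul_add_two_le_of_strictAnti_NMfin hn hx h₀ (fun i hi => (hchain i hi).1) hlast
    omega
end
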